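/- For $|t|<1$ and complex $\gamma$, the Bateman polynomials satisfy $\sum_{n=0}^{\infty}\frac{(\gamma)_n}{n!}\, B_n^{\alpha,\beta}(z)\, t^n = (1-t)^{-\gamma}\,{}_{1}F_{2}\big(\gamma;\alpha+1,\beta+1;-\tfrac{zt}{1-t}\big)$. -/

import Mathlib

open Complex MeasureTheory intervalIntegral Finset

noncomputable def poch (a : ℂ) (k : ℕ) : ℂ := ∏ i ∈ Finset.range k, (a + i)

noncomputable def F01 (c z : ℂ) : ℂ :=
  ∑' k : ℕ, 1 / (poch c k * (Nat.factorial k : ℂ)) * z ^ k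

noncomputable def F02 (b c z : ℂ) : ℂ :=
  ∑' k : ℕ, 1 / (poch b k * poch c k * (Nat.factorial k : ℂ)) * z ^ k

noncomputable def F12 (a b c z : ℂ) : ℂ :=
  ∑' k : ℕ, poch a k / (poch b k * poch c k * (Nat.factorial k : ℂ)) * z ^ k

noncomputable def F22 (a b c d z : ℂ) : ℂ :=
  ∑' k : ℕ, poch a k * poch b k / (poch c k * poch d k * (Nat.factorial k : ℂ)) * z ^ k

noncomputable def F32 (a b c d e z : ℂ) : ℂ :=
  ∑' k : ℕ, poch a k * poch b k * poch c k / (poch d k * poch e k * (Nat.factorial k : ℂ)) * z ^ k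

noncomputable def F23 (a b c d e z : ℂ) : ℂ :=
  ∑' k : ℕ, poch a k * poch b k / (poch c k * poch d k * poch e k * (Nat.factorial k : ℂ)) * z ^ k

noncomputable def Bate (n : ℕ) (α β z : ℂ) : ℂ :=
  ∑ k ∈ Finset.range (n+1),
    (-1 : ℂ) ^ k * (Nat.factorial n : ℂ) /
      ((Nat.factorial k : ℂ) * (Nat.factorial (n - k) : ℂ) * poch (α+1) k * poch (β+1) k) * z ^ k


open Filter Topology

lemma poch_zero (a : ℂ) : poch a 0 = 1 := by simp [poch]

lemma poch_succ (a : ℂ) (n : ℕ) : poch a (n+1) = poch a n * (a + n) := by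
  simp [poch, Finset.prod_range_succ]

lemma poch_add (a : ℂ) (k m : ℕ) : poch a (k + m) = poch a k * poch (a + k) m := by
  induction m with
  | zero => simp [poch]
  | succ m ih =>
      rw [← Nat.add_assoc, poch_succ, ih, poch_succ]
      push_cast
      ring

lemma poch_ne_zero {a : ℂ} (h : ∀ n : ℕ, a ≠ -n) (k : ℕ) : poch a k ≠ 0 := by
  rw [poch]
  refine Finset.prod_ne_zero_iff.mpr fun i _ => ?_
  intro hi
  exact h i (by linear_combination hi)

noncomputable def pochR (x : ℝ) (k : ℕ) : ℝ := ∏ i ∈ Finset.range k, (x + i)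

lemma pochR_succ (x : ℝ) (n : ℕ) : pochR x (n+1) = pochR x n * (x + n) := by
  simp [pochR, Finset.prod_range_succ]

lemma abs_poch_le {a : ℂ} {r : ℝ} (h : ‖a‖ ≤ r) (k : ℕ) :
    ‖poch a k‖ ≤ pochR r k := by
  rw [poch, pochR, norm_prod]
  refine Finset.prod_le_prod (fun i _ => norm_nonneg _) fun i _ => ?_
  calc ‖a + i‖ ≤ ‖a‖ + ‖(i : ℂ)‖ := norm_add_le _ _
  _ ≤ r + i := by rw [Complex.norm_natCast]; exact add_le_add_left h _

lemma poch_ofReal (y : ℝ) (m : ℕ) : poch ((y : ℝ) : ℂ) m = ((pochR y m : ℝ) : ℂ) := by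
  rw [poch, pochR]
  push_cast
  rfl

lemma ev_ratio {x l : ℝ} (C : ℝ) (h : x < l) (hx : 0 ≤ x) :
    ∀ᶠ m : ℕ in Filter.atTop, (C + m) * x ≤ l * m := by
  have hlx : 0 < l - x := by linarith
  filter_upwards [Filter.eventually_ge_atTop (⌈C * x / (l - x)⌉₊)] with m hm
  have hm' : C * x / (l - x) ≤ (m : ℝ) := le_trans (Nat.le_ceil _) (by exact_mod_cast hm)
  rw [div_le_iff₀ hlx] at hm'
  nlinarith

lemma summable_abs_poch_shift (c : ℂ) (j : ℕ) {x : ℝ} (hx : 0 ≤ x) (hx1 : x < 1) :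
    Summable (fun m : ℕ => ‖poch c (m + j)‖ / (Nat.factorial m) * x ^ m) := by
  set l : ℝ := (1 + x) / 2 with hl
  have hxl : x < l := by rw [hl]; linarith
  have hl1 : l < 1 := by rw [hl]; linarith
  have hl0 : 0 ≤ l := by rw [hl]; linarith
  apply summable_of_ratio_norm_eventually_le hl1
  filter_upwards [ev_ratio (‖c‖ + j) hxl hx] with m hm
  have hq : 0 ≤ ‖poch c (m + j)‖ / (Nat.factorial m) * x ^ m := by positivity
  have hA : ‖c + ((m + j : ℕ) : ℂ)‖ ≤ ‖c‖ + j + m := by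
    calc ‖c + ((m + j : ℕ) : ℂ)‖
        ≤ ‖c‖ + ‖((m + j : ℕ) : ℂ)‖ := norm_add_le _ _
      _ = ‖c‖ + (m + j) := by rw [Complex.norm_natCast]; push_cast; ring
      _ = ‖c‖ + j + m := by ring
  have hsucc : ‖poch c (m + 1 + j)‖ / (Nat.factorial (m+1)) * x ^ (m+1)
      = (‖poch c (m + j)‖ / (Nat.factorial m) * x ^ m) *
        (‖c + ((m + j : ℕ) : ℂ)‖ * x / (m + 1)) := by
    have h1 : m + 1 + j = (m + j) + 1 := by ring
    rw [h1, poch_succ, norm_mul, Nat.factorial_succ, pow_succ]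
    have h2 : ((m+1 : ℕ) : ℝ) ≠ 0 := by positivity
    push_cast
    field_simp
  rw [Real.norm_of_nonneg (by positivity), Real.norm_of_nonneg (by positivity), hsucc]
  have hfac : ‖c + ((m + j : ℕ) : ℂ)‖ * x / (m + 1) ≤ l := by
    rw [div_le_iff₀ (by positivity)]
    have : ‖c + ((m + j : ℕ) : ℂ)‖ * x ≤ (‖c‖ + j + m) * x :=
      mul_le_mul_of_nonneg_right hA hx
    have h2 : l * m ≤ l * (m + 1) := by nlinarith
    nlinarith
  calc (‖poch c (m + j)‖ / (Nat.factorial m) * x ^ m) *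
        (‖c + ((m + j : ℕ) : ℂ)‖ * x / (m + 1))
      ≤ (‖poch c (m + j)‖ / (Nat.factorial m) * x ^ m) * l :=
        mul_le_mul_of_nonneg_left hfac hq
    _ = l * (‖poch c (m + j)‖ / (Nat.factorial m) * x ^ m) := by ring

lemma norm_poch_term (c s : ℂ) (j m : ℕ) :
    ‖poch c (m + j) / (Nat.factorial m : ℂ) * s ^ m‖
      = ‖poch c (m + j)‖ / (Nat.factorial m) * (‖s‖) ^ m := by
  simp [map_mul, map_div₀, map_pow, Complex.norm_natCast]

lemma summable_poch_shift (c s : ℂ) (j : ℕ) (hs : ‖s‖ < 1) :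
    Summable (fun m : ℕ => poch c (m + j) / (Nat.factorial m : ℂ) * s ^ m) := by
  apply Summable.of_norm
  simp only [norm_poch_term]
  exact summable_abs_poch_shift c j (norm_nonneg _) hs

lemma one_sub_ne_zero_of_abs_lt {t : ℂ} (ht : ‖t‖ < 1) : (1 : ℂ) - t ≠ 0 := by
  intro h
  have h1 : t = 1 := by linear_combination -h
  rw [h1] at ht
  simp at ht

lemma hasSum_binomial (c t : ℂ) (ht : ‖t‖ < 1) :
    HasSum (fun m : ℕ => poch c m / (Nat.factorial m : ℂ) * t ^ m) ((1 - t) ^ (-c)) := by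
  set ρ : ℝ := (‖t‖ + 1) / 2 with hρ
  have habs : 0 ≤ ‖t‖ := norm_nonneg _
  have hρ0 : 0 < ρ := by rw [hρ]; linarith
  have hρ1 : ρ < 1 := by rw [hρ]; linarith
  have htρ : ‖t‖ < ρ := by rw [hρ]; linarith
  set g : ℕ → ℂ → ℂ := fun m y => poch c m / (Nat.factorial m : ℂ) * y ^ m with hg
  set g' : ℕ → ℂ → ℂ := fun m y => poch c m / (Nat.factorial m : ℂ) * (m * y ^ (m - 1)) with hg'
  -- summability of g at any |y| < 1
  have hsum_s : ∀ y : ℂ, ‖y‖ < 1 → Summable fun m => g m y := fun y hy =>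
    summable_poch_shift c y 0 hy
  -- shifted form of g'
  have hfacC : ∀ n : ℕ, ((Nat.factorial (n+1) : ℕ) : ℂ) = ((n : ℂ) + 1) * (Nat.factorial n : ℂ) := by
    intro n
    rw [Nat.factorial_succ]
    push_cast
    ring
  have hne1 : ∀ n : ℕ, ((n : ℂ) + 1) ≠ 0 := by
    intro n
    intro h
    have h2 : ((n : ℂ) + 1) = ((n + 1 : ℕ) : ℂ) := by push_cast; ring
    rw [h2] at h
    exact Nat.succ_ne_zero n (Nat.cast_injective (h.trans (Nat.cast_zero (R := ℂ)).symm))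
  have hg'succ : ∀ (y : ℂ) (n : ℕ),
      g' (n+1) y = poch c (n+1) / (Nat.factorial n : ℂ) * y ^ n := by
    intro y n
    simp only [hg', Nat.add_sub_cancel]
    rw [hfacC n]
    push_cast
    rw [div_mul_eq_mul_div, div_mul_eq_mul_div]
    rw [div_eq_div_iff (by exact mul_ne_zero (hne1 n) (by exact_mod_cast (Nat.factorial_ne_zero n))) (by exact_mod_cast (Nat.factorial_ne_zero n))]
    ring
  have hSD : ∀ y : ℂ, ‖y‖ < 1 → Summable fun m => g' m y := by
    intro y hy
    refine (summable_nat_add_iff 1).mp ?_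
    exact ((summable_poch_shift c y 1 hy).congr fun n => (hg'succ y n).symm)
  -- derivative bound
  set u : ℕ → ℝ := fun m =>
    ‖poch c m‖ / (Nat.factorial m) * (m * ρ ^ (m - 1)) with hu_def
  have hu : Summable u := by
    refine (summable_nat_add_iff 1).mp ?_
    refine ((summable_abs_poch_shift c 1 hρ0.le hρ1).congr fun n => ?_)
    have h2 : ((n : ℝ) + 1) ≠ 0 := by positivity
    have h3 : ((Nat.factorial (n+1) : ℕ) : ℝ) = ((n : ℝ) + 1) * (Nat.factorial n : ℝ) := by
      rw [Nat.factorial_succ]; push_cast; ring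
    simp only [hu_def, Nat.add_sub_cancel]
    rw [h3]
    push_cast
    rw [div_mul_eq_mul_div, div_mul_eq_mul_div]
    rw [div_eq_div_iff (by positivity) (by positivity)]
    ring
  have hderiv : ∀ (m : ℕ) (y : ℂ), y ∈ Metric.ball (0 : ℂ) ρ → HasDerivAt (g m) (g' m y) y :=
    fun m y _ => (hasDerivAt_pow m y).const_mul _
  have hbound : ∀ (m : ℕ) (y : ℂ), y ∈ Metric.ball (0 : ℂ) ρ → ‖g' m y‖ ≤ u m := by
    intro m y hy
    rw [mem_ball_zero_iff] at hy
    have h1 : ‖g' m y‖ = ‖poch c m‖ / (Nat.factorial m) *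
        (m * ‖y‖ ^ (m - 1)) := by
      simp [hg', map_mul, map_div₀, map_pow, Complex.norm_natCast]
    have h2 : ‖y‖ ^ (m - 1) ≤ ρ ^ (m - 1) :=
      pow_le_pow_left₀ (norm_nonneg _) hy.le _
    rw [h1]
    simp only [hu_def]
    refine mul_le_mul_of_nonneg_left ?_ (by positivity)
    exact mul_le_mul_of_nonneg_left h2 (Nat.cast_nonneg m)
  have hF0 : Summable fun m => g m 0 := hsum_s 0 (by simp)
  have hDeriv : ∀ y ∈ Metric.ball (0 : ℂ) ρ,
      HasDerivAt (fun w => ∑' m, g m w) (∑' m, g' m y) y := by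
    intro y hy
    exact hasDerivAt_tsum_of_isPreconnected hu Metric.isOpen_ball
      ((convex_ball (0 : ℂ) ρ).isPreconnected) hderiv hbound
      (Metric.mem_ball_self hρ0) hF0 hy
  -- the key algebraic identity
  have key : ∀ y : ℂ, ‖y‖ < 1 →
      (1 - y) * (∑' m, g' m y) = c * ∑' m, g m y := by
    intro y hy
    have hb0 : Summable fun m => g m y := hsum_s y hy
    have hb1 : Summable fun n : ℕ => poch c (n+1) / (Nat.factorial n : ℂ) * y ^ n :=
      summable_poch_shift c y 1 hy
    have hterm : ∀ n : ℕ, poch c (n+1) / (Nat.factorial n : ℂ) * y ^ n = (c + n) * g n y := by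
      intro n
      simp only [hg, poch_succ]
      ring
    have hb2 : Summable fun n : ℕ => (c + n) * g n y := hb1.congr hterm
    have hD2 : (∑' m, g' m y) = ∑' n, poch c (n+1) / (Nat.factorial n : ℂ) * y ^ n := by
      rw [Summable.tsum_eq_zero_add (hSD y hy)]
      simp only [hg'succ y]
      have : g' 0 y = 0 := by simp [hg']
      rw [this, zero_add]
    have h3 : ∀ n : ℕ, ((n+1 : ℕ) : ℂ) * g (n+1) y
        = y * (poch c (n+1) / (Nat.factorial n : ℂ) * y ^ n) := by
      intro n
      have hfne : ((Nat.factorial n : ℕ) : ℂ) ≠ 0 := Nat.cast_ne_zero.mpr (Nat.factorial_ne_zero n)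
      simp only [hg]
      rw [hfacC n]
      push_cast
      set d : ℂ := (n : ℂ) + 1 with hd
      have hdne : d ≠ 0 := hne1 n
      field_simp
      ring
    have hmul : Summable fun n : ℕ => (n : ℂ) * g n y := by
      refine (summable_nat_add_iff 1).mp ?_
      exact (hb1.mul_left y).congr fun n => by rw [← h3 n]
    have hySD : y * (∑' m, g' m y) = ∑' n : ℕ, (n : ℂ) * g n y := by
      rw [hD2, ← tsum_mul_left, Summable.tsum_eq_zero_add hmul]
      simp only [Nat.cast_zero, zero_mul, zero_add]
      exact tsum_congr fun n => (h3 n).symm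
    have hD3 : (∑' m, g' m y) = ∑' n, (c + n) * g n y := by
      rw [hD2]; exact tsum_congr hterm
    have hfin : (∑' m, g' m y) - y * (∑' m, g' m y) = c * ∑' m, g m y := by
      rw [hySD, hD3, ← Summable.tsum_sub hb2 hmul, ← tsum_mul_left]
      exact tsum_congr fun n => by ring
    linear_combination hfin
  -- derivative of the product is zero
  have hG : ∀ y ∈ Metric.ball (0 : ℂ) ρ,
      HasDerivAt (fun w => (∑' m, g m w) * (1 - w) ^ c) 0 y := by
    intro y hy
    have hy1 : ‖y‖ < 1 := by
      rw [mem_ball_zero_iff] at hy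
      calc ‖y‖ = ‖y‖ := rfl
      _ < ρ := hy
      _ < 1 := hρ1
    have hyne : (1 : ℂ) - y ≠ 0 := one_sub_ne_zero_of_abs_lt hy1
    have hre : 0 < (1 - y).re ∨ (1 - y).im ≠ 0 := by
      left
      have := Complex.abs_re_le_norm y
      have h2 : y.re ≤ ‖y‖ := le_trans (le_abs_self _) this
      simp only [Complex.sub_re, Complex.one_re]
      linarith
    have h1 := hDeriv y hy
    have h2 : HasDerivAt (fun w : ℂ => (1 - w) ^ c) (c * (1 - y) ^ (c - 1) * (-1)) y :=
      HasDerivAt.cpow_const ((hasDerivAt_id y).const_sub 1) hre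
    have h3 := h1.mul h2
    refine h3.congr_deriv ?_
    have hsplit : (1 - y) ^ c = (1 - y) ^ (c - 1) * (1 - y) := by
      conv_lhs => rw [show c = (c - 1) + 1 by ring]
      rw [Complex.cpow_add _ _ hyne, Complex.cpow_one]
    have hkey := key y hy1
    rw [hsplit]
    linear_combination ((1 - y) ^ (c - 1)) * hkey
  -- the product is constant on the ball
  have ht_mem : t ∈ Metric.ball (0 : ℂ) ρ := by rwa [mem_ball_zero_iff]
  have h0_mem : (0 : ℂ) ∈ Metric.ball (0 : ℂ) ρ := Metric.mem_ball_self hρ0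
  have hzero : ∀ y ∈ Metric.ball (0 : ℂ) ρ,
      HasFDerivWithinAt (fun w => (∑' m, g m w) * (1 - w) ^ c)
        ((0 : ℂ →L[ℂ] ℂ)) (Metric.ball (0 : ℂ) ρ) y := by
    intro y hy
    have h5 := ((hG y hy).hasFDerivAt).hasFDerivWithinAt
      (s := Metric.ball (0 : ℂ) ρ)
    have h6 : (ContinuousLinearMap.toSpanSingleton ℂ (0 : ℂ)) = 0 :=
      ContinuousLinearMap.ext fun x => by simp
    rwa [h6] at h5
  have hconst : (∑' m, g m t) * (1 - t) ^ c = (∑' m, g m 0) * (1 - 0) ^ c := by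
    have := (convex_ball (0 : ℂ) ρ).norm_image_sub_le_of_norm_hasFDerivWithin_le
      (C := 0) hzero (fun y _ => by simp) h0_mem ht_mem
    have h2 : ‖(∑' m, g m t) * (1 - t) ^ c - (∑' m, g m 0) * (1 - 0) ^ c‖ ≤ 0 := by
      simpa using this
    have h3 := norm_nonneg ((∑' m, g m t) * (1 - t) ^ c - (∑' m, g m 0) * (1 - 0) ^ c)
    have h4 : ‖(∑' m, g m t) * (1 - t) ^ c - (∑' m, g m 0) * (1 - 0) ^ c‖ = 0 := le_antisymm h2 h3
    rw [norm_eq_zero, sub_eq_zero] at h4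
    exact h4
  have hF0val : (∑' m, g m 0) = 1 := by
    rw [tsum_eq_single 0]
    · simp [hg, poch_zero]
    · intro m hm
      simp [hg, zero_pow hm]
  have hval : (∑' m, g m t) * (1 - t) ^ c = 1 := by
    rw [hconst, hF0val]
    simp [Complex.one_cpow]
  have htne : (1 : ℂ) - t ≠ 0 := one_sub_ne_zero_of_abs_lt ht
  have hcne : ((1 : ℂ) - t) ^ c ≠ 0 := by
    simp [Complex.cpow_eq_zero_iff, htne]
  have hfinal : (∑' m, g m t) = (1 - t) ^ (-c) := by
    rw [Complex.cpow_neg]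
    field_simp at hval ⊢
    linear_combination hval
  exact (Summable.hasSum_iff (hsum_s t ht)).mpr hfinal

lemma aux1 (a b c d e f : ℂ) (hb : b ≠ 0) (hd : d ≠ 0) :
    a / b * (c * b / d * e) * f = a * c * e * f / d := by
  field_simp

set_option maxHeartbeats 1000000 in
lemma aux2 (A B w1 w2 u v pa pb T1 T2 : ℂ) (hu : u ≠ 0) (hv : v ≠ 0)
    (hpa : pa ≠ 0) (hpb : pb ≠ 0) :
    A * B * w1 * w2 * (T1 * T2) / (u * v * pa * pb)
      = A * (w1 * w2) * T1 / (u * pa * pb) * (B / v * T2) := by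
  field_simp

set_option maxHeartbeats 1600000 in
theorem bateman_generating (alpha beta gamma z t : ℂ) (ht : ‖t‖ < 1)
    (ha : ∀ n : ℕ, alpha + 1 ≠ -n) (hb : ∀ n : ℕ, beta + 1 ≠ -n) :
    (∑' n : ℕ, poch gamma n / (Nat.factorial n : ℂ) * Bate n alpha beta z * t ^ n) =
      (1 - t) ^ (-gamma) *
        F12 gamma (alpha + 1) (beta + 1) (-(z * t) / (1 - t)) := by
  classical
  have habs : 0 ≤ ‖t‖ := norm_nonneg _
  have hone : (0 : ℝ) < 1 - ‖t‖ := by linarith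
  have h1t : (1 : ℂ) - t ≠ 0 := one_sub_ne_zero_of_abs_lt ht
  set x : ℝ := ‖t‖ with hxd
  set g0 : ℝ := ‖gamma‖ + 1 with hg0
  set Q : ℝ := (1 - x)⁻¹ with hQ
  set Cg : ℝ := (1 - x) ^ (-g0) with hCg
  have hQ0 : 0 < Q := by rw [hQ]; positivity
  have hCg0 : 0 < Cg := Real.rpow_pos_of_pos hone _
  set U : ℕ → ℂ := fun k => poch gamma k * (-z) ^ k * t ^ k /
      ((Nat.factorial k : ℂ) * poch (alpha + 1) k * poch (beta + 1) k) with hUd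
  set V : ℕ → ℕ → ℂ := fun k m => poch (gamma + k) m / (Nat.factorial m : ℂ) * t ^ m with hVd
  have hpa : ∀ k, poch (alpha+1) k ≠ 0 := poch_ne_zero ha
  have hpb : ∀ k, poch (beta+1) k ≠ 0 := poch_ne_zero hb
  have hpaa : ∀ k : ℕ, alpha + 1 + k ≠ 0 := by
    intro k h
    exact ha k (by linear_combination h)
  have hpbb : ∀ k : ℕ, beta + 1 + k ≠ 0 := by
    intro k h
    exact hb k (by linear_combination h)
  -- inner sums
  have hV_hasSum : ∀ k : ℕ, HasSum (V k) ((1 - t) ^ (-(gamma + k))) :=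
    fun k => hasSum_binomial (gamma + k) t ht
  -- real comparison rows
  have hRow : ∀ k : ℕ, HasSum (fun m : ℕ => pochR (g0 + k) m / (Nat.factorial m) * x ^ m)
      (Cg * Q ^ k) := by
    intro k
    have hxc : ‖((x : ℝ) : ℂ)‖ < 1 := by
      rwa [Complex.norm_real, Real.norm_of_nonneg habs]
    have h := hasSum_binomial ((g0 + k : ℝ) : ℂ) ((x : ℝ) : ℂ) hxc
    have hfun : ∀ m : ℕ, poch ((g0 + k : ℝ) : ℂ) m / (Nat.factorial m : ℂ) * ((x : ℝ) : ℂ) ^ m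
        = ((pochR (g0 + k) m / (Nat.factorial m) * x ^ m : ℝ) : ℂ) := by
      intro m
      rw [poch_ofReal]
      push_cast
      ring
    have hval : ((1 : ℂ) - ((x : ℝ) : ℂ)) ^ (-((g0 + k : ℝ) : ℂ))
        = (((1 - x) ^ (-(g0 + (k : ℝ))) : ℝ) : ℂ) := by
      rw [Complex.ofReal_cpow hone.le]
      push_cast
      ring_nf
    have h2 : HasSum (fun m : ℕ => ((pochR (g0 + k) m / (Nat.factorial m) * x ^ m : ℝ) : ℂ))
        ((((1 - x) ^ (-(g0 + (k : ℝ))) : ℝ) : ℂ)) := by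
      rw [← funext hfun, ← hval]
      exact h
    have h3 := Complex.hasSum_ofReal.mp h2
    have h4 : (1 - x) ^ (-(g0 + (k : ℝ))) = Cg * Q ^ k := by
      rw [show -(g0 + (k : ℝ)) = -g0 + -(k : ℝ) by ring, Real.rpow_add hone, ← hCg,
        Real.rpow_neg hone.le, Real.rpow_natCast, ← inv_pow, ← hQ]
    rwa [h4] at h3
  -- norm computations
  have hVnorm : ∀ k m : ℕ, ‖V k m‖
      = ‖poch (gamma + k) m‖ / (Nat.factorial m) * x ^ m := by
    intro k m
    simp only [hVd, norm_mul, norm_div, norm_pow]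
    rw [Complex.norm_natCast, ← hxd]
  have hVsum : ∀ k : ℕ, Summable fun m => ‖V k m‖ := by
    intro k
    refine (summable_abs_poch_shift (gamma + k) 0 habs ht).congr fun m => ?_
    rw [hVnorm, Nat.add_zero]
  have hVle : ∀ k m : ℕ, ‖V k m‖ ≤ pochR (g0 + k) m / (Nat.factorial m) * x ^ m := by
    intro k m
    rw [hVnorm]
    have h1 : ‖poch (gamma + k) m‖ ≤ pochR (g0 + k) m := by
      refine abs_poch_le ?_ m
      calc ‖gamma + k‖ ≤ ‖gamma‖ + ‖(k : ℂ)‖ :=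
            norm_add_le _ _
        _ = ‖gamma‖ + k := by rw [Complex.norm_natCast]
        _ ≤ g0 + k := by rw [hg0]; linarith
    gcongr
  have hTsum_le : ∀ k : ℕ, (∑' m, ‖V k m‖) ≤ Cg * Q ^ k := by
    intro k
    calc (∑' m, ‖V k m‖) ≤ ∑' m, pochR (g0 + k) m / (Nat.factorial m) * x ^ m :=
          Summable.tsum_le_tsum (hVle k) (hVsum k) (hRow k).summable
      _ = Cg * Q ^ k := (hRow k).tsum_eq
  have hUnorm : ∀ k : ℕ, ‖U k‖ = ‖poch gamma k‖ * ‖z‖ ^ k * x ^ k /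
      ((Nat.factorial k) * ‖poch (alpha+1) k‖ * ‖poch (beta+1) k‖) := by
    intro k
    rw [hUd]
    rw [norm_div, norm_mul, norm_mul, norm_mul, norm_mul, norm_pow, norm_pow, norm_neg]
    simp [Complex.norm_natCast, hxd]
  set f : ℕ → ℝ := fun k => ‖U k‖ * (Cg * Q ^ k) with hfd
  have hfnonneg : ∀ k, 0 ≤ f k := fun k => by positivity
  have hUsucc : ∀ k : ℕ, f (k+1) = f k * (‖gamma + k‖ * ‖z‖ * x * Q /
      (((k : ℝ) + 1) * ‖alpha + 1 + k‖ * ‖beta + 1 + k‖)) := by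
    intro k
    have hane : ‖alpha + 1 + k‖ ≠ 0 := by
      simpa using hpaa k
    have hbne : ‖beta + 1 + k‖ ≠ 0 := by
      simpa using hpbb k
    have hfne : ((Nat.factorial k : ℕ) : ℝ) ≠ 0 := by positivity
    have hk1 : ((k : ℝ) + 1) ≠ 0 := by positivity
    simp only [hfd]
    rw [hUnorm, hUnorm, poch_succ, poch_succ, poch_succ, norm_mul, norm_mul, norm_mul]
    rw [Nat.factorial_succ]
    push_cast
    rw [pow_succ, pow_succ, pow_succ]
    field_simp
  set X : ℝ := ‖z‖ * x * Q with hXd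
  have hX0 : 0 ≤ X := by positivity
  have hev : ∀ᶠ k : ℕ in atTop, ‖gamma + k‖ * ‖z‖ * x * Q /
      (((k : ℝ) + 1) * ‖alpha + 1 + k‖ * ‖beta + 1 + k‖) ≤ 1/2 := by
    set N : ℕ := ⌈‖alpha+1‖ + 2*X + ‖beta+1‖ + 2 + g0⌉₊ with hN
    filter_upwards [eventually_ge_atTop N] with k hk
    have hkR : ‖alpha+1‖ + 2*X + ‖beta+1‖ + 2 + g0 ≤ (k : ℝ) :=
      le_trans (Nat.le_ceil _) (by exact_mod_cast hk)
    have habs0 : (0:ℝ) ≤ ‖alpha+1‖ := norm_nonneg _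
    have habs1 : (0:ℝ) ≤ ‖beta+1‖ := norm_nonneg _
    have hg00 : (0:ℝ) ≤ g0 := by rw [hg0]; positivity
    have hA1 : (k : ℝ) - ‖alpha+1‖ ≤ ‖alpha + 1 + k‖ := by
      have h1 := norm_sub_le (alpha + 1 + (k:ℂ)) (alpha + 1)
      have h2 : (alpha + 1 + (k:ℂ)) - (alpha + 1) = (k : ℂ) := by ring
      rw [h2, Complex.norm_natCast] at h1
      linarith
    have hB1 : (k : ℝ) - ‖beta+1‖ ≤ ‖beta + 1 + k‖ := by
      have h1 := norm_sub_le (beta + 1 + (k:ℂ)) (beta + 1)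
      have h2 : (beta + 1 + (k:ℂ)) - (beta + 1) = (k : ℂ) := by ring
      rw [h2, Complex.norm_natCast] at h1
      linarith
    have h2X : 2*X ≤ ‖alpha + 1 + k‖ := by linarith
    have h2B : (2:ℝ) ≤ ‖beta + 1 + k‖ := by linarith
    have hg0k : g0 ≤ (k : ℝ) := by linarith
    have hγ : ‖gamma + k‖ ≤ g0 + k := by
      calc ‖gamma + k‖ ≤ ‖gamma‖ + ‖(k : ℂ)‖ :=
            norm_add_le _ _
        _ = ‖gamma‖ + k := by rw [Complex.norm_natCast]
        _ ≤ g0 + k := by rw [hg0]; linarith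
    have hApos : 0 < ‖alpha + 1 + k‖ :=
      norm_pos_iff.mpr (hpaa k)
    have hBpos : 0 < ‖beta + 1 + k‖ :=
      norm_pos_iff.mpr (hpbb k)
    rw [div_le_iff₀ (by positivity)]
    have h7 : ‖gamma + k‖ * ‖z‖ * x * Q = ‖gamma + k‖ * X := by
      rw [hXd]; ring
    rw [h7]
    have h5 : (2*X) * 2 ≤ ‖alpha + 1 + k‖ * ‖beta + 1 + k‖ :=
      mul_le_mul h2X h2B (by norm_num) (le_trans hX0 (by linarith))
    have h6 : ‖gamma + k‖ * X ≤ (g0 + k) * X := mul_le_mul_of_nonneg_right hγ hX0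
    nlinarith [mul_le_mul_of_nonneg_left h5 (show (0:ℝ) ≤ (k:ℝ)+1 by positivity)]
  have hUCQ : Summable f := by
    apply summable_of_ratio_norm_eventually_le (r := 1/2) (by norm_num)
    filter_upwards [hev] with k hk
    rw [Real.norm_of_nonneg (hfnonneg _), Real.norm_of_nonneg (hfnonneg _), hUsucc k]
    calc f k * (‖gamma + k‖ * ‖z‖ * x * Q /
          (((k : ℝ) + 1) * ‖alpha + 1 + k‖ * ‖beta + 1 + k‖))
        ≤ f k * (1/2) := mul_le_mul_of_nonneg_left hk (hfnonneg k)
      _ = 1/2 * f k := by ring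
  have hrows : ∀ k : ℕ, Summable fun m => ‖U k * V k m‖ := by
    intro k
    refine ((hVsum k).mul_left ‖U k‖).congr fun m => ?_
    exact (norm_mul _ _).symm
  have hrowsums : Summable fun k => ∑' m, ‖U k * V k m‖ := by
    refine Summable.of_nonneg_of_le (fun k => tsum_nonneg fun m => norm_nonneg _)
      (fun k => ?_) hUCQ
    have h1 : (∑' m, ‖U k * V k m‖) = ‖U k‖ * ∑' m, ‖V k m‖ := by
      rw [← tsum_mul_left]
      exact tsum_congr fun m => norm_mul _ _
    rw [h1]
    exact mul_le_mul_of_nonneg_left (hTsum_le k) (norm_nonneg _)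
  have hprod : Summable fun p : ℕ × ℕ => ‖U p.1 * V p.1 p.2‖ :=
    (summable_prod_of_nonneg fun p => norm_nonneg _).mpr ⟨hrows, hrowsums⟩
  have hAs : Summable fun p : ℕ × ℕ => U p.1 * V p.1 p.2 := Summable.of_norm hprod
  set G : ℕ × ℕ → ℂ := fun p => U p.1 * V p.1 p.2 with hGd
  have hterm : ∀ n : ℕ, poch gamma n / (Nat.factorial n : ℂ) * Bate n alpha beta z * t ^ n
      = ∑ k ∈ Finset.range (n+1), G (k, n - k) := by
    intro n
    rw [Bate, Finset.mul_sum, Finset.sum_mul]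
    refine Finset.sum_congr rfl fun k hk => ?_
    have hkn : k ≤ n := Nat.lt_succ_iff.mp (Finset.mem_range.mp hk)
    have hpoch : poch gamma k * poch (gamma + k) (n - k) = poch gamma n := by
      rw [← poch_add]
      congr 1
      omega
    have htpow : t ^ k * t ^ (n - k) = t ^ n := by
      rw [← pow_add]
      congr 1
      omega
    have hneg : (-z) ^ k = (-1 : ℂ) ^ k * z ^ k := by rw [neg_pow]
    have hfn : ((Nat.factorial n : ℕ) : ℂ) ≠ 0 := Nat.cast_ne_zero.mpr (Nat.factorial_ne_zero n)
    have hfk : ((Nat.factorial k : ℕ) : ℂ) ≠ 0 := Nat.cast_ne_zero.mpr (Nat.factorial_ne_zero k)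
    have hfnk : ((Nat.factorial (n-k) : ℕ) : ℂ) ≠ 0 :=
      Nat.cast_ne_zero.mpr (Nat.factorial_ne_zero _)
    have hD : ((Nat.factorial k : ℂ) * (Nat.factorial (n-k) : ℂ) * poch (alpha+1) k *
        poch (beta+1) k) ≠ 0 :=
      mul_ne_zero (mul_ne_zero (mul_ne_zero hfk hfnk) (hpa k)) (hpb k)
    simp only [hGd, hUd, hVd]
    rw [aux1 _ _ _ _ _ _ hfn hD, ← hpoch, ← htpow, hneg]
    exact aux2 _ _ _ _ _ _ _ _ _ _ hfk hfnk (hpa k) (hpb k)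
  have hre : (∑' p : ℕ × ℕ, G p) = ∑' n : ℕ, ∑ k ∈ Finset.range (n+1), G (k, n - k) := by
    have h1 : Summable fun x : Σ n : ℕ, {p : ℕ × ℕ // p ∈ Finset.HasAntidiagonal.antidiagonal n} => G x.2 :=
      (Finset.HasAntidiagonal.sigmaAntidiagonalEquivProd (A := ℕ)).summable_iff.mpr hAs
    calc (∑' p : ℕ × ℕ, G p)
        = ∑' x : Σ n : ℕ, {p : ℕ × ℕ // p ∈ Finset.HasAntidiagonal.antidiagonal n}, G x.2 :=
          ((Finset.HasAntidiagonal.sigmaAntidiagonalEquivProd (A := ℕ)).tsum_eq G).symm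
      _ = ∑' n : ℕ, ∑' p : {p : ℕ × ℕ // p ∈ Finset.HasAntidiagonal.antidiagonal n}, G p := Summable.tsum_sigma h1
      _ = ∑' n : ℕ, ∑ p ∈ Finset.HasAntidiagonal.antidiagonal n, G p :=
          tsum_congr fun n => Finset.tsum_subtype _ G
      _ = ∑' n : ℕ, ∑ k ∈ Finset.range (n+1), G (k, n - k) :=
          tsum_congr fun n => Finset.Nat.sum_antidiagonal_eq_sum_range_succ_mk G n
  have hinner : ∀ k : ℕ, (∑' m, G (k, m)) = U k * (1 - t) ^ (-(gamma + (k : ℂ))) := by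
    intro k
    simp only [hGd]
    rw [tsum_mul_left, (hV_hasSum k).tsum_eq]
  have hlast : ∀ k : ℕ, U k * (1 - t) ^ (-(gamma + (k : ℂ)))
      = (1 - t) ^ (-gamma) * (poch gamma k /
          (poch (alpha+1) k * poch (beta+1) k * (Nat.factorial k : ℂ)) * (-(z*t)/(1-t)) ^ k) := by
    intro k
    have hpow : ((1:ℂ) - t) ^ (k : ℕ) ≠ 0 := pow_ne_zero _ h1t
    have hfk : ((Nat.factorial k : ℕ) : ℂ) ≠ 0 := Nat.cast_ne_zero.mpr (Nat.factorial_ne_zero k)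
    have h1 : ((1:ℂ) - t) ^ (-(gamma + (k : ℂ))) = (1 - t) ^ (-gamma) * ((1 - t) ^ (k : ℕ))⁻¹ := by
      rw [show -(gamma + (k : ℂ)) = -gamma + -(k : ℂ) by ring, Complex.cpow_add _ _ h1t,
        Complex.cpow_neg (1 - t) ((k : ℕ) : ℂ), Complex.cpow_natCast]
    have h2 : (-(z*t)/(1-t)) ^ k = (-z) ^ k * t ^ k * ((1 - t) ^ (k : ℕ))⁻¹ := by
      rw [div_pow, show (-(z*t)) = (-z) * t by ring, mul_pow, div_eq_mul_inv]
    rw [h1, h2]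
    simp only [hUd]
    set pA := poch (alpha + 1) k with hpA
    set pB := poch (beta + 1) k with hpB
    have hA0 : pA ≠ 0 := hpa k
    have hB0 : pB ≠ 0 := hpb k
    set W := ((1:ℂ) - t) ^ (-gamma) with hW
    field_simp
  calc (∑' n : ℕ, poch gamma n / (Nat.factorial n : ℂ) * Bate n alpha beta z * t ^ n)
      = ∑' n : ℕ, ∑ k ∈ Finset.range (n+1), G (k, n - k) := tsum_congr hterm
    _ = ∑' p : ℕ × ℕ, G p := hre.symm
    _ = ∑' k : ℕ, ∑' m : ℕ, G (k, m) := Summable.tsum_prod hAs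
    _ = ∑' k : ℕ, U k * (1 - t) ^ (-(gamma + (k : ℂ))) := tsum_congr hinner
    _ = ∑' k : ℕ, (1 - t) ^ (-gamma) * (poch gamma k /
          (poch (alpha+1) k * poch (beta+1) k * (Nat.factorial k : ℂ)) * (-(z*t)/(1-t)) ^ k) :=
        tsum_congr hlast
    _ = (1 - t) ^ (-gamma) * F12 gamma (alpha + 1) (beta + 1) (-(z * t) / (1 - t)) := by
        rw [tsum_mul_left, F12]
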